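/- In a CAT(0) space X, for every four points x, y, u, v: d(x,y)² + d(u,v)² ≤ d(x,v)² + d(y,u)² + 2·d(x,u)·d(y,v). -/
import Mathlib


open Filter Topology Metric Set

/-- A (chosen) geodesic bicombing witnessing that `X` is a geodesic space:
`geo x y t` is the point at parameter fraction `t ∈ [0,1]` on a geodesic from `x` to `y`. -/
structure Geodesic (X : Type*) [MetricSpace X] where
  geo : X → X → ℝ → X
  geo_zero : ∀ x y, geo x y 0 = x
  geo_one : ∀ x y, geo x y 1 = y
  geo_dist : ∀ x y : X, ∀ s ∈ Set.Icc (0:ℝ) 1, ∀ t ∈ Set.Icc (0:ℝ) 1,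
    dist (geo x y s) (geo x y t) = |s - t| * dist x y

/-- The CN (Bruhat–Tits) inequality characterizing CAT(0) among geodesic spaces. -/
def CAT0 (X : Type*) [MetricSpace X] : Prop :=
  ∀ x y z m : X, dist x m = dist x y / 2 → dist y m = dist x y / 2 →
    dist z m ^ 2 ≤ dist z x ^ 2 / 2 + dist z y ^ 2 / 2 - dist x y ^ 2 / 4

/-- Midpoint convexity at dyadic points gives the chord bound at dyadic points. -/
lemma dyadic_midpoint_convex (h : ℝ → ℝ)
    (hm : ∀ s ∈ Set.Icc (0:ℝ) 1, ∀ r ∈ Set.Icc (0:ℝ) 1, h ((s + r) / 2) ≤ (h s + h r) / 2) :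
    ∀ n k : ℕ, k ≤ 2 ^ n →
      h ((k : ℝ) / 2 ^ n) ≤ (1 - (k : ℝ) / 2 ^ n) * h 0 + ((k : ℝ) / 2 ^ n) * h 1 := by
  intro n
  induction n with
  | zero =>
    intro k hk
    interval_cases k <;> norm_num
  | succ n ih =>
    intro k hk
    have h2n : (0:ℝ) < 2 ^ n := by positivity
    rcases Nat.even_or_odd k with ⟨j, hj⟩ | ⟨j, hj⟩
    · -- k = j + j
      have hjle : j ≤ 2 ^ n := by omega
      have hcast : (k : ℝ) / 2 ^ (n + 1) = (j : ℝ) / 2 ^ n := by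
        subst hj; push_cast; field_simp; ring
      rw [hcast]
      exact ih j hjle
    · -- k = 2 j + 1
      have hj1 : j + 1 ≤ 2 ^ n := by omega
      have hjle : j ≤ 2 ^ n := by omega
      have hs : (j : ℝ) / 2 ^ n ∈ Set.Icc (0:ℝ) 1 := by
        constructor
        · positivity
        · rw [div_le_one h2n]; exact_mod_cast hjle
      have hr : ((j : ℝ) + 1) / 2 ^ n ∈ Set.Icc (0:ℝ) 1 := by
        constructor
        · positivity
        · rw [div_le_one h2n]; exact_mod_cast hj1
      have hcast : (k : ℝ) / 2 ^ (n + 1) = ((j : ℝ) / 2 ^ n + ((j : ℝ) + 1) / 2 ^ n) / 2 := by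
        subst hj; push_cast; field_simp; ring
      have key := hm _ hs _ hr
      have ihs := ih j hjle
      have ihr := ih (j + 1) hj1
      have hcast2 : ((j : ℕ) + 1 : ℕ) = ((j : ℝ) + 1 : ℝ) • (1:ℝ) := by push_cast; simp
      have ihr' : h (((j : ℝ) + 1) / 2 ^ n) ≤
          (1 - ((j : ℝ) + 1) / 2 ^ n) * h 0 + (((j : ℝ) + 1) / 2 ^ n) * h 1 := by
        have : ((j + 1 : ℕ) : ℝ) = (j : ℝ) + 1 := by push_cast; ring
        rw [← this]; exact ihr
      rw [hcast]
      linarith [key, ihs, ihr']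

/-- Convexity of the squared distance along a geodesic in a CAT(0) space. -/
lemma sq_dist_convex {X : Type*} [MetricSpace X] (G : Geodesic X) (hX : CAT0 X)
    (u v z : X) {t : ℝ} (ht : t ∈ Set.Icc (0:ℝ) 1) :
    dist z (G.geo u v t) ^ 2 ≤
      (1 - t) * dist z u ^ 2 + t * dist z v ^ 2 - t * (1 - t) * dist u v ^ 2 := by
  set γ : ℝ → X := G.geo u v with hγ
  set L : ℝ := dist u v with hL
  set h : ℝ → ℝ := fun s => dist z (γ s) ^ 2 + s * (1 - s) * L ^ 2 with hh
  -- midpoint convexity of h from the CN inequality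
  have hm : ∀ s ∈ Set.Icc (0:ℝ) 1, ∀ r ∈ Set.Icc (0:ℝ) 1,
      h ((s + r) / 2) ≤ (h s + h r) / 2 := by
    intro s hs r hr
    have hmem : (s + r) / 2 ∈ Set.Icc (0:ℝ) 1 := by
      constructor <;> [linarith [hs.1, hr.1]; linarith [hs.2, hr.2]]
    have dsr : dist (γ s) (γ r) = |s - r| * L := G.geo_dist u v s hs r hr
    have dsm : dist (γ s) (γ ((s + r) / 2)) = dist (γ s) (γ r) / 2 := by
      rw [G.geo_dist u v s hs _ hmem, dsr]
      have : s - (s + r) / 2 = (s - r) / 2 := by ring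
      rw [this, abs_div]
      rw [abs_of_pos (by norm_num : (0:ℝ) < 2)]
      ring
    have drm : dist (γ r) (γ ((s + r) / 2)) = dist (γ s) (γ r) / 2 := by
      rw [G.geo_dist u v r hr _ hmem, dsr]
      have : r - (s + r) / 2 = -((s - r) / 2) := by ring
      rw [this, abs_neg, abs_div]
      rw [abs_of_pos (by norm_num : (0:ℝ) < 2)]
      rw [abs_sub_comm]
      ring
    have cn := hX (γ s) (γ r) z (γ ((s + r) / 2))
      (by rw [dist_comm] at dsm ⊢; exact dsm) (by rw [dist_comm] at drm ⊢; exact drm)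
    rw [dsr] at cn
    have habs : (|s - r| * L) ^ 2 = (s - r) ^ 2 * L ^ 2 := by
      rw [mul_pow, sq_abs]
    rw [habs] at cn
    simp only [hh, dist_comm]
    nlinarith [cn]
  -- dyadic approximation sequence
  set k : ℕ → ℕ := fun n => ⌊t * 2 ^ n⌋₊ with hk
  set tseq : ℕ → ℝ := fun n => (k n : ℝ) / 2 ^ n with htseq
  have h2n : ∀ n : ℕ, (0:ℝ) < 2 ^ n := fun n => by positivity
  have htn : ∀ n : ℕ, (0:ℝ) ≤ t * 2 ^ n := fun n => mul_nonneg ht.1 (le_of_lt (h2n n))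
  have hkle : ∀ n, k n ≤ 2 ^ n := by
    intro n
    have : t * 2 ^ n ≤ ((2 ^ n : ℕ) : ℝ) := by
      push_cast
      nlinarith [ht.2, h2n n]
    calc k n ≤ ⌊((2 ^ n : ℕ) : ℝ)⌋₊ := Nat.floor_mono this
      _ = 2 ^ n := Nat.floor_natCast _
  have htseq_le : ∀ n, tseq n ≤ t := by
    intro n
    rw [htseq]
    rw [div_le_iff₀ (h2n n)]
    exact Nat.floor_le (htn n)
  have htseq_ge : ∀ n, t - (1/2) ^ n ≤ tseq n := by
    intro n
    have := Nat.lt_floor_add_one (t * 2 ^ n)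
    rw [htseq]
    rw [le_div_iff₀ (h2n n)]
    have h1 : (1/2:ℝ) ^ n * 2 ^ n = 1 := by
      rw [div_pow, one_pow, div_mul_cancel₀]
      exact ne_of_gt (h2n n)
    nlinarith [this]
  have hhalf : Tendsto (fun n : ℕ => ((1:ℝ)/2) ^ n) atTop (𝓝 0) :=
    tendsto_pow_atTop_nhds_zero_of_lt_one (by norm_num) (by norm_num)
  have hts : Tendsto tseq atTop (𝓝 t) := by
    apply tendsto_of_tendsto_of_tendsto_of_le_of_le
      (g := fun n : ℕ => t - (1/2) ^ n) (h := fun _ : ℕ => t)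
    · simpa using tendsto_const_nhds.sub hhalf
    · exact tendsto_const_nhds
    · exact htseq_ge
    · exact htseq_le
  have htseq_mem : ∀ n, tseq n ∈ Set.Icc (0:ℝ) 1 := by
    intro n
    constructor
    · positivity
    · rw [htseq, div_le_one (h2n n)]
      exact_mod_cast hkle n
  -- convergence of distances
  have hd : Tendsto (fun n => dist z (γ (tseq n))) atTop (𝓝 (dist z (γ t))) := by
    rw [tendsto_iff_dist_tendsto_zero]
    apply squeeze_zero (fun n => dist_nonneg) (g := fun n => (1/2) ^ n * |L|)
    · intro n
      have h1 : dist (dist z (γ (tseq n))) (dist z (γ t)) ≤ dist (γ (tseq n)) (γ t) := by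
        rw [Real.dist_eq]
        rw [dist_comm z (γ (tseq n)), dist_comm z (γ t)]
        exact abs_dist_sub_le _ _ _
      have h2 : dist (γ (tseq n)) (γ t) = |tseq n - t| * L :=
        G.geo_dist u v _ (htseq_mem n) t ht
      have h3 : |tseq n - t| ≤ (1/2) ^ n := by
        rw [abs_le]
        constructor
        · linarith [htseq_ge n]
        · linarith [htseq_le n, pow_pos (by norm_num : (0:ℝ) < 1/2) n]
      calc dist (dist z (γ (tseq n))) (dist z (γ t)) ≤ |tseq n - t| * L := h2 ▸ h1
        _ ≤ (1/2) ^ n * |L| := by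
            apply mul_le_mul h3 (le_abs_self L) dist_nonneg
            positivity
    · simpa using hhalf.mul_const |L|
  have hhseq : Tendsto (fun n => h (tseq n)) atTop (𝓝 (h t)) := by
    simp only [hh]
    exact (hd.pow 2).add (((hts.mul (tendsto_const_nhds.sub hts))).mul tendsto_const_nhds)
  have hrseq : Tendsto (fun n => (1 - tseq n) * h 0 + tseq n * h 1) atTop
      (𝓝 ((1 - t) * h 0 + t * h 1)) :=
    ((tendsto_const_nhds.sub hts).mul tendsto_const_nhds).add (hts.mul tendsto_const_nhds)
  have key : h t ≤ (1 - t) * h 0 + t * h 1 := by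
    apply le_of_tendsto_of_tendsto' hhseq hrseq
    intro n
    exact dyadic_midpoint_convex h hm n (k n) (hkle n)
  have h0 : h 0 = dist z u ^ 2 := by
    simp only [hh, hγ]
    rw [G.geo_zero]
    ring
  have h1 : h 1 = dist z v ^ 2 := by
    simp only [hh, hγ]
    rw [G.geo_one]
    ring
  rw [h0, h1] at key
  simp only [hh] at key
  linarith [key]

/-- Reshetnyak's four-point inequality in CAT(0) spaces. -/
theorem reshetnyak_four_point {X : Type*} [MetricSpace X]
    (G : Geodesic X) (hX : CAT0 X) :
    ∀ x y u v : X,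
      dist x y ^ 2 + dist u v ^ 2 ≤
        dist x v ^ 2 + dist y u ^ 2 + 2 * dist x u * dist y v := by
  intro x y u v
  set a : ℝ := dist x u with ha
  set b : ℝ := dist y v with hb
  rcases eq_or_lt_of_le (dist_nonneg : (0:ℝ) ≤ a) with ha0 | ha0
  · -- x = u
    have hxu : x = u := by rw [← dist_eq_zero]; exact ha0.symm
    subst hxu
    rw [dist_comm x y]
    nlinarith [dist_nonneg (x := y) (y := x), dist_nonneg (x := y) (y := v)]
  rcases eq_or_lt_of_le (dist_nonneg : (0:ℝ) ≤ b) with hb0 | hb0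
  · -- y = v
    have hyv : y = v := by rw [← dist_eq_zero]; exact hb0.symm
    subst hyv
    rw [dist_comm u y]
    nlinarith [dist_nonneg (x := x) (y := u), dist_nonneg (x := x) (y := y)]
  -- main case: a > 0, b > 0
  set t : ℝ := a / (a + b) with hT
  have hab : (0:ℝ) < a + b := by linarith
  have ht0 : 0 < t := div_pos ha0 hab
  have ht1 : t < 1 := by
    rw [hT, div_lt_one hab]; linarith
  have htmem : t ∈ Set.Icc (0:ℝ) 1 := ⟨le_of_lt ht0, le_of_lt ht1⟩
  have hta : t * (a + b) = a := by
    rw [hT, div_mul_cancel₀]; exact ne_of_gt hab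
  have e1 : (1 - t) * a = t * b := by nlinarith [hta]
  clear_value t
  set p : X := G.geo u v t with hp
  have hA := sq_dist_convex G hX u v x htmem
  have hB := sq_dist_convex G hX u v y htmem
  have htri : dist x y ≤ dist x p + dist p y := dist_triangle x p y
  have hA' : dist x p ^ 2 ≤ (1 - t) * a ^ 2 + t * dist x v ^ 2 - t * (1 - t) * dist u v ^ 2 := by
    rw [hp, ha]; exact hA
  have hB' : dist p y ^ 2 ≤ (1 - t) * dist y u ^ 2 + t * b ^ 2 - t * (1 - t) * dist u v ^ 2 := by
    rw [hp, dist_comm _ y, hb]; exact hB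
  have hpos : (0:ℝ) < t * (1 - t) := mul_pos ht0 (by linarith)
  -- weighted Cauchy-Schwarz step
  have hsq : dist x y ^ 2 ≤ (dist x p + dist p y) ^ 2 := by
    nlinarith [htri, dist_nonneg (x := x) (y := y), dist_nonneg (x := x) (y := p),
      dist_nonneg (x := p) (y := y)]
  have hmul : t * (1 - t) * dist x y ^ 2 ≤ t * (1 - t) * (dist x p + dist p y) ^ 2 :=
    mul_le_mul_of_nonneg_left hsq (le_of_lt hpos)
  have hcs : t * (1 - t) * dist x y ^ 2 ≤
      (1 - t) * dist x p ^ 2 + t * dist p y ^ 2 := by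
    nlinarith [hmul, sq_nonneg ((1 - t) * dist x p - t * dist p y)]
  -- combine
  have e2 : (1 - t) ^ 2 * a ^ 2 + t ^ 2 * b ^ 2 = 2 * (t * (1 - t)) * (a * b) := by
    linear_combination ((1 - t) * a - t * b) * e1
  have hmain : t * (1 - t) * (dist x y ^ 2 + dist u v ^ 2) ≤
      t * (1 - t) * (dist x v ^ 2 + dist y u ^ 2 + 2 * a * b) := by
    nlinarith [hcs, hA', hB', e2, hpos]
  have hfin := le_of_mul_le_mul_left hmain hpos
  rw [ha, hb] at hfin
  linarith
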